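/- In base-extension semantics with bases of level at most 1, if p is an atom and B any base, then extending B by the axiom rule for p preserves atomic derivability: for any atom q, if q is derivable from assumption p in base B (i.e., p ⊢_B q), then q is derivable outright in the base B ∪ {axiom p} (i.e., ⊢_{B∪{p}} q), and conversely any derivation of q in B ∪ {axiom p} yields, upon replacing each use of the axiom p by the assumption p, a derivation witnessing p ⊢_B q. -/
import Mathlib


/-- Propositional atoms: `⊥` and countably many atoms `p n`. -/
inductive PAtom : Type
  | bot
  | p (n : ℕ)
deriving DecidableEq

/-- Formulas of the propositional language. -/
inductive Formula : Type
  | atom (a : PAtom)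
  | and (A B : Formula)
  | or (A B : Formula)
  | imp (A B : Formula)
deriving DecidableEq

/-- Higher-level atomic rules: a rule has a list of premises, each of which may
discharge a list of lower-level rules, and has an atomic conclusion.
A level-0 rule (axiom) is `mk [] a`. -/
inductive AtomicRule : Type
  | mk (prems : List (List AtomicRule × PAtom)) (concl : PAtom)

/-- The atomic explosion rules: from `⊥` infer any atom. -/
def AE : Set AtomicRule := { r | ∃ a, r = AtomicRule.mk [([], PAtom.bot)] a }

/-- An atomic base is a set of atomic rules containing atomic explosion. -/
def IsBase (B : Set AtomicRule) : Prop := AE ⊆ B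

/-- Atomic derivability: `Der B Γ a` means the atom `a` is derivable from the assumed
atoms in `Γ` using the rules of `B` (rules discharged by an application of a
higher-level rule are temporarily added to the base). -/
inductive Der : Set AtomicRule → Set PAtom → PAtom → Prop
  | assum {B : Set AtomicRule} {Γ : Set PAtom} {a : PAtom} : a ∈ Γ → Der B Γ a
  | app {B : Set AtomicRule} {Γ : Set PAtom} (prems : List (List AtomicRule × PAtom)) (a : PAtom) :
      AtomicRule.mk prems a ∈ B →
      (∀ pr ∈ prems, Der (B ∪ { r | r ∈ pr.1 }) Γ pr.2) →
      Der B Γ a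

/-- The miB-eS forcing relation `⊩_B A` (consequence with empty antecedent):
atoms by atomic derivability, `∧` by both conjuncts, `∨` by one disjunct,
`→` by consequence over all extensions of the base. -/
def Force : Set AtomicRule → Formula → Prop
  | B, .atom a => Der B ∅ a
  | B, .and A C => Force B A ∧ Force B C
  | B, .or A C => Force B A ∨ Force B C
  | B, .imp A C => ∀ X : Set AtomicRule, B ⊆ X → Force X A → Force X C

/-- The miB-eS consequence relation `Γ ⊩_B A`. -/
def Cons (B : Set AtomicRule) (Γ : Finset Formula) (A : Formula) : Prop :=
  if Γ = ∅ then Force B A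
  else ∀ X : Set AtomicRule, B ⊆ X → (∀ G ∈ Γ, Force X G) → Force X A

lemma der_fwd {p : PAtom} {B : Set AtomicRule} {Γ : Set PAtom} {a : PAtom}
    (h : Der B Γ a) : Der (B ∪ {AtomicRule.mk [] p}) (Γ \ {p}) a := by
  induction h with
  | @assum B Γ a ha =>
    by_cases hp : a = p
    · subst hp
      exact Der.app [] a (Or.inr rfl) (by intro pr hpr; cases hpr)
    · exact Der.assum ⟨ha, hp⟩
  | @app B Γ prems a hmem hprems ih =>
    refine Der.app prems a (Or.inl hmem) ?_
    intro pr hpr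
    have := ih pr hpr
    rwa [Set.union_right_comm] at this

lemma der_bwd {p : PAtom} {C : Set AtomicRule} {Γ : Set PAtom} {a : PAtom}
    (h : Der C Γ a) :
    ∀ B : Set AtomicRule, C = B ∪ {AtomicRule.mk [] p} → Der B (Γ ∪ {p}) a := by
  induction h with
  | @assum C Γ a ha =>
    intro B hC; exact Der.assum (Or.inl ha)
  | @app C Γ prems a hmem hprems ih =>
    intro B hC
    subst hC
    rcases hmem with hmem | hmem
    · refine Der.app prems a hmem ?_
      intro pr hpr
      exact ih pr hpr _ (Set.union_right_comm _ _ _)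
    · have : AtomicRule.mk prems a = AtomicRule.mk [] p := hmem
      cases this
      exact Der.assum (Or.inr rfl)

/-- extending a base by the axiom rule for an atom `p` corresponds
exactly to assuming `p`: for atoms `p, q`, `p ⊢_B q` iff `⊢_{B ∪ {axiom p}} q`
(each direction witnessed by replacing the assumption `p` by the axiom `p` and
conversely). -/
theorem derivable_from_assumption_iff_axiom (B : Set AtomicRule) (hB : IsBase B)
    (p q : PAtom) :
    Der B {p} q ↔ Der (B ∪ {AtomicRule.mk [] p}) ∅ q := by
  constructor
  · intro h
    have := der_fwd (p := p) h
    simpa using this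
  · intro h
    have := der_bwd h B rfl
    simpa using this
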